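/- Let β, β', α, α' ∈ Π_aff^{re,+} with α + α' = c and β + β' = c, and suppose β ≠ α. Then (s_β s_{β'})^m ≠ (s_α s_{α'})^m for every positive integer m. -/

import Mathlib

open scoped BigOperators

namespace AffA

/-- Elements `⟨w, λ⟩` representing `w · t_λ` in the affine Weyl group
`W_aff = W ⋉ Q∨` of type `A_{n-1}^{(1)}`; the translation part `λ` is recorded
in `ε`-coordinates. -/
@[ext]
structure Aff (n : ℕ) where
  w : Equiv.Perm (Fin n)
  t : Fin n → ℤ

namespace Aff

variable {n : ℕ}

instance : Nonempty (Aff n) := ⟨⟨1, 0⟩⟩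

/-- multiplication: `(w t_λ)(v t_μ) = (wv) t_{v⁻¹λ + μ}`. -/
def mul' (x y : Aff n) : Aff n := ⟨x.w * y.w, fun i => x.t (y.w i) + y.t i⟩

def inv' (x : Aff n) : Aff n := ⟨x.w⁻¹, fun i => - x.t (x.w⁻¹ i)⟩

instance : Group (Aff n) where
  mul := mul'
  one := ⟨1, 0⟩
  inv := inv'
  mul_assoc a b c := by
    show mul' (mul' a b) c = mul' a (mul' b c)
    simp only [mul', Aff.mk.injEq]
    refine ⟨mul_assoc _ _ _, funext fun i => ?_⟩
    simp [Equiv.Perm.mul_apply, add_assoc]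
  one_mul a := by
    obtain ⟨aw, av⟩ := a
    show mul' ⟨1, 0⟩ ⟨aw, av⟩ = ⟨aw, av⟩
    simp only [mul', Aff.mk.injEq]
    exact ⟨one_mul _, funext fun i => by simp⟩
  mul_one a := by
    obtain ⟨aw, av⟩ := a
    show mul' ⟨aw, av⟩ ⟨1, 0⟩ = ⟨aw, av⟩
    simp only [mul', Aff.mk.injEq]
    exact ⟨mul_one _, funext fun i => by simp⟩
  inv_mul_cancel a := by
    obtain ⟨aw, av⟩ := a
    show mul' (inv' ⟨aw, av⟩) ⟨aw, av⟩ = ⟨1, 0⟩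
    simp only [mul', inv', Aff.mk.injEq]
    exact ⟨inv_mul_cancel _, funext fun i => by simp⟩

/-- cyclic successor on the vertices `α_0, …, α_{n-1}` of the affine Dynkin diagram. -/
def fsucc (i : Fin n) : Fin n :=
  ⟨(i.val + 1) % n, Nat.mod_lt _ (Nat.lt_of_le_of_lt (Nat.zero_le _) i.isLt)⟩

/-- the coefficient of `α_0`. -/
def coeff0 (a : Fin n → ℤ) : ℤ := if h : 0 < n then a ⟨0, h⟩ else 0

/-- the `ε`-coordinates of the finite part of an element of the affine root
lattice written in the coordinates of the simple roots `α_0, …, α_{n-1}`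
(`δ` is sent to `0`). -/
def finPart (a : Fin n → ℤ) : Fin n → ℤ := fun i => a (fsucc i) - a i

/-- `c = δ = α_0 + α_1 + ⋯ + α_{n-1}`, in simple root coordinates. -/
def cvec (n : ℕ) : Fin n → ℤ := fun _ => 1

/-- the affine Cartan matrix of type `A_{n-1}^{(1)}` (for `n ≥ 3`). -/
def cartan (i j : Fin n) : ℤ :=
  if i = j then 2 else if j = fsucc i ∨ i = fsucc j then -1 else 0

/-- the natural pairing `⟨a, b∨⟩` of elements of the affine root lattice
(simple root coordinates). -/
def pairing (a b : Fin n → ℤ) : ℤ := ∑ i : Fin n, ∑ j : Fin n, a i * cartan i j * b j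

/-- real roots of the affine root system: lattice vectors of norm `2`. -/
def IsRealRoot (a : Fin n → ℤ) : Prop := pairing a a = 2

/-- affine positive real roots: real roots with nonnegative coordinates. -/
def IsPosRoot (a : Fin n → ℤ) : Prop := IsRealRoot a ∧ ∀ i, 0 ≤ a i

/-- perpendicularity of affine roots. -/
def Perp (a b : Fin n → ℤ) : Prop := pairing a b = 0

/-- the support of an affine root. -/
def supp (a : Fin n → ℤ) : Finset (Fin n) := Finset.univ.filter fun i => a i ≠ 0

/-- the supports of `a` and `b` are disconnected in the affine Dynkin diagram
(a cycle on `α_0, …, α_{n-1}`): no vertex of one is equal or adjacent to a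
vertex of the other. -/
def Disconn (a b : Fin n → ℤ) : Prop :=
  ∀ i j : Fin n, a i ≠ 0 → b j ≠ 0 → i ≠ j ∧ j ≠ fsucc i ∧ i ≠ fsucc j

/-- for roots `a, b < c` (0–1 vectors), `a ∩ b = Σ_{α_i ∈ supp a ∩ supp b} α_i`. -/
def inter (a b : Fin n → ℤ) : Fin n → ℤ :=
  fun i => if a i ≠ 0 ∧ b i ≠ 0 then 1 else 0

instance : Nonempty (Equiv.Perm (Fin n)) := ⟨1⟩

/-- the reflection `s_β = s_α t_{mα}` associated to the real root `β = α + mδ`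
(given in simple root coordinates). -/
noncomputable def sref (a : Fin n → ℤ) : Aff n :=
  ⟨Classical.epsilon fun w : Equiv.Perm (Fin n) => ∃ p q : Fin n,
      finPart a = Pi.single p 1 - Pi.single q 1 ∧ w = Equiv.swap p q,
    fun i => coeff0 a * finPart a i⟩

/-- the simple reflections `s_0, …, s_{n-1}`. -/
noncomputable def simple (i : Fin n) : Aff n := sref (Pi.single i 1)

/-- the Coxeter length, via the Iwahori–Matsumoto formula
`ℓ(w t_λ) = Σ_{γ ∈ Π⁺} |χ(w·γ < 0) + ⟨λ, γ⟩|`. -/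
def len (x : Aff n) : ℕ :=
  ∑ p : Fin n, ∑ q : Fin n,
    if p < q then ((if x.w q < x.w p then (1 : ℤ) else 0) + (x.t p - x.t q)).natAbs else 0

/-- translation `t_v` by an element `v` of the (co)root lattice given in
`ε`-coordinates. -/
def trE (v : Fin n → ℤ) : Aff n := ⟨1, v⟩

/-- a Bruhat step: an edge of the moment graph which increases the length. -/
def bstep (u v : Aff n) : Prop :=
  (∃ a, IsPosRoot a ∧ v = u * sref a) ∧ len u < len v

/-- the Bruhat order: `u ≤ v` iff there is an increasing chain from `u` to `v`
in the moment graph. -/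
def ble (u v : Aff n) : Prop := Relation.ReflTransGen bstep u v

/-- there is a chain in the moment graph from `u` to `v` of total degree `≤ d`. -/
def ChainTo (d : Fin n → ℤ) (u v : Aff n) : Prop :=
  ∃ l : List (Fin n → ℤ),
    (∀ b ∈ l, IsPosRoot b) ∧ l.sum ≤ d ∧ v = u * (l.map sref).prod

/-- the set of elements reachable from some `u' ≤ u` by a chain of degree `≤ d`. -/
def nbhdSet (d : Fin n → ℤ) (u : Aff n) : Set (Aff n) :=
  {v | ∃ u', ble u' u ∧ ChainTo d u' v}

/-- the combinatorial curve neighborhood `Γ_d(u)`: the Bruhat-maximal elements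
among those reachable from some `u' ≤ u` by a chain of degree `≤ d`. -/
def curveNbhd (d : Fin n → ℤ) (u : Aff n) : Set (Aff n) :=
  {v | v ∈ nbhdSet d u ∧ ∀ x ∈ nbhdSet d u, ble v x → x = v}

/-- one step of the Hecke product. -/
noncomputable def heckeStep (u : Aff n) (i : Fin n) : Aff n :=
  if len u < len (u * simple i) then u * simple i else u

/-- the Hecke product `u · v`: multiply `u` on the right, left to right, by the
letters of a reduced word for `v`. -/
noncomputable def heckeMul (u v : Aff n) : Aff n :=
  (Classical.epsilon fun l : List (Fin n) =>
      (l.map simple).prod = v ∧ l.length = len v).foldl heckeStep u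

/-- the Hecke product `s_{β_1} · s_{β_2} · ⋯ · s_{β_r}` of the reflections of a
list of roots. -/
noncomputable def heckeList (l : List (Fin n → ℤ)) : Aff n :=
  l.foldl (fun u b => heckeMul u (sref b)) 1

/-- the defining recursion for `z_d`: `z_0 = id` and `z_d = s_α · z_{d-α}`
(Hecke product), where `α` is any maximal root with `α ≤ d`. -/
inductive IsZ : (Fin n → ℤ) → Aff n → Prop
  | zero : IsZ 0 1
  | step {d a : Fin n → ℤ} {x : Aff n} :
      IsPosRoot a → a ≤ d →
      (∀ b, IsPosRoot b → b ≤ d → a ≤ b → b = a) →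
      IsZ (d - a) x → IsZ d (heckeMul (sref a) x)

end Aff
end AffA

/-! If `a` is a real root, the finite part of `a` has squared norm `⟨a, a⟩ = 2` and
coordinates summing to zero, hence equals `ε_p - ε_q`. If moreover `a + a' = c`, then `s_a`
and `s_{a'}` share the finite part `(p q)`, and `s_a s_{a'}` is the translation by minus the
finite part of `a`. Translations have torsion-free powers, so `(s_β s_{β'})^m = (s_α s_{α'})^m`
forces `β` and `α` to have the same finite part, i.e. `β = α + kδ`. As `0 ≤ α, β ≤ c` and
neither is `0`, `k = 0`. -/

theorem Int.exists_eq_single_sub_single_of_sum_sq_eq_two {ι : Type*} [Fintype ι]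
    [DecidableEq ι] {v : ι → ℤ} (hsum : ∑ i, v i = 0) (hsq : ∑ i, v i ^ 2 = 2) :
    ∃ p q, v = Pi.single p 1 - Pi.single q 1 := by
  have hv : v ≠ 0 := by rintro rfl; simp at hsq
  obtain ⟨p, hp⟩ : ∃ p, 0 < v p := by
    by_contra! h
    exact hv (funext fun i => (Finset.sum_eq_zero_iff_of_nonpos fun i _ => h i).1 hsum i
      (Finset.mem_univ i))
  obtain ⟨q, hq⟩ : ∃ q, v q < 0 := by
    by_contra! h
    exact hv (funext fun i => (Finset.sum_eq_zero_iff_of_nonneg fun i _ => h i).1 hsum i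
      (Finset.mem_univ i))
  have hpq : p ≠ q := by rintro rfl; omega
  have hsplit := Finset.sum_add_sum_compl {p, q} fun i => v i ^ 2
  rw [Finset.sum_pair hpq, hsq] at hsplit
  have hrest : 0 ≤ ∑ i ∈ {p, q}ᶜ, v i ^ 2 := Finset.sum_nonneg fun i _ => sq_nonneg (v i)
  have hp1 : v p = 1 := by nlinarith
  have hq1 : v q = -1 := by nlinarith
  have hrest0 : ∀ i ∉ ({p, q} : Finset ι), v i = 0 := fun i hi =>
    pow_eq_zero_iff two_ne_zero |>.1 <|
      (Finset.sum_eq_zero_iff_of_nonneg fun i _ => sq_nonneg (v i)).1 (by nlinarith) i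
        (Finset.mem_compl.2 hi)
  refine ⟨p, q, funext fun i => ?_⟩
  by_cases hip : i = p
  · subst hip; simp [hp1, hpq]
  by_cases hiq : i = q
  · subst hiq; simp [hq1, Ne.symm hpq]
  simp [hip, hiq, hrest0 i (by simp [hip, hiq])]

theorem Pi.single_sub_single_swap_apply {ι M : Type*} [DecidableEq ι] [AddCommGroup M]
    (p q i : ι) (x : M) :
    (Pi.single p x - Pi.single q x : ι → M) (Equiv.swap p q i)
      = -(Pi.single p x - Pi.single q x : ι → M) i := by
  rcases eq_or_ne p q with rfl | hpq
  · simp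
  rw [Equiv.swap_apply_def]
  split_ifs with hp hq <;> simp [*, Ne.symm hpq]

namespace AffA.Aff

variable {n : ℕ}

lemma val_fsucc (i : Fin n) : (fsucc i).val = if i.val + 1 = n then 0 else i.val + 1 := by
  show (i.val + 1) % n = _
  split_ifs with h
  · rw [h, Nat.mod_self]
  · exact Nat.mod_eq_of_lt (by omega)

lemma fsucc_eq_finRotate : (fsucc : Fin n → Fin n) = finRotate n := by
  funext i
  obtain _ | k := n
  · exact i.elim0
  · rw [Fin.ext_iff, val_fsucc, coe_finRotate]
    simp [Fin.ext_iff]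

lemma fsucc_ne_self (hn : 2 ≤ n) (i : Fin n) : fsucc i ≠ i := by
  rw [ne_eq, Fin.ext_iff, val_fsucc]
  split_ifs <;> omega

lemma fsucc_fsucc_ne_self (hn : 3 ≤ n) (i : Fin n) : fsucc (fsucc i) ≠ i := by
  rw [ne_eq, Fin.ext_iff, val_fsucc, val_fsucc]
  split_ifs <;> omega

lemma sum_comp_fsucc {M : Type*} [AddCommMonoid M] (f : Fin n → M) :
    ∑ i, f (fsucc i) = ∑ i, f i := by
  rw [fsucc_eq_finRotate]
  exact Equiv.sum_comp _ f

lemma eq_of_forall_fsucc_eq {α : Type*} {f : Fin n → α} (h : ∀ i, f (fsucc i) = f i)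
    (i j : Fin n) : f i = f j := by
  obtain _ | k := n
  · exact i.elim0
  suffices ∀ i, f i = f 0 by rw [this i, this j]
  refine Fin.induction rfl fun i ih => ?_
  have hsucc : fsucc i.castSucc = i.succ := by
    rw [fsucc_eq_finRotate, finRotate_apply, Fin.coeSucc_eq_succ]
  rw [← hsucc, h, ih]

lemma cartan_eq (hn : 3 ≤ n) (i j : Fin n) :
    cartan i j = (if i = j then 2 else 0) - (if j = fsucc i then 1 else 0)
      - (if i = fsucc j then 1 else 0) := by
  unfold cartan
  by_cases hij : i = j
  · subst hij
    simp [(fsucc_ne_self (by omega) i).symm]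
  by_cases hj : j = fsucc i
  · subst hj
    simp [hij, (fsucc_fsucc_ne_self hn i).symm]
  by_cases hi : i = fsucc j
  · subst hi
    simp [fsucc_ne_self (by omega) j, (fsucc_fsucc_ne_self hn j).symm]
  · simp [hij, hj, hi]

lemma pairing_self_eq_sum_finPart_sq (hn : 3 ≤ n) (a : Fin n → ℤ) :
    pairing a a = ∑ i, finPart a i ^ 2 := by
  simp only [pairing, cartan_eq hn, mul_sub, sub_mul, Finset.sum_sub_distrib, mul_ite, ite_mul,
    mul_zero, zero_mul, mul_one, Finset.sum_ite_eq, Finset.mem_univ, if_true]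
  rw [Finset.sum_comm (f := fun i j => if i = fsucc j then a i * a j else 0)]
  simp only [Finset.sum_ite_eq', Finset.mem_univ, if_true]
  calc ∑ i, a i * 2 * a i - ∑ i, a i * a (fsucc i) - ∑ i, a (fsucc i) * a i
      = ∑ i, ((a (fsucc i) - a i) ^ 2 + (a i ^ 2 - a (fsucc i) ^ 2)) := by
        simp only [← Finset.sum_sub_distrib]
        exact Finset.sum_congr rfl fun i _ => by ring
    _ = ∑ i, finPart a i ^ 2 := by
        rw [Finset.sum_add_distrib, Finset.sum_sub_distrib, sum_comp_fsucc (fun i => a i ^ 2),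
          sub_self, add_zero]
        rfl

lemma sum_finPart (a : Fin n → ℤ) : ∑ i, finPart a i = 0 := by
  simp only [finPart, Finset.sum_sub_distrib, sum_comp_fsucc a, sub_self]

lemma IsRealRoot.exists_finPart_eq (hn : 3 ≤ n) {a : Fin n → ℤ} (ha : IsRealRoot a) :
    ∃ p q, finPart a = Pi.single p 1 - Pi.single q 1 :=
  Int.exists_eq_single_sub_single_of_sum_sq_eq_two (sum_finPart a)
    (pairing_self_eq_sum_finPart_sq hn a ▸ ha)

lemma IsRealRoot.ne_zero {a : Fin n → ℤ} (ha : IsRealRoot a) : a ≠ 0 := by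
  rintro rfl
  simp [IsRealRoot, pairing] at ha

lemma finPart_eq_neg_of_add_eq_cvec {a a' : Fin n → ℤ} (hc : a + a' = cvec n) :
    finPart a' = -finPart a := by
  funext i
  have := congrFun hc i
  have := congrFun hc (fsucc i)
  simp only [finPart, Pi.neg_apply, Pi.add_apply, cvec] at *
  omega

lemma exists_sref_w_eq_swap {a : Fin n → ℤ}
    (h : ∃ p q, finPart a = Pi.single p 1 - Pi.single q 1) :
    ∃ p q, finPart a = Pi.single p 1 - Pi.single q 1 ∧ (sref a).w = Equiv.swap p q :=
  let ⟨p, q, hf⟩ := h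
  Classical.epsilon_spec
    (p := fun w => ∃ p q, finPart a = Pi.single p 1 - Pi.single q 1 ∧ w = Equiv.swap p q)
    ⟨_, p, q, hf, rfl⟩

lemma sref_w_eq_of_finPart_eq_neg {a b : Fin n → ℤ} (h : finPart b = -finPart a) :
    (sref b).w = (sref a).w := by
  show Classical.epsilon _ = Classical.epsilon _
  congr 1
  funext w
  rw [h]
  apply propext
  constructor <;> rintro ⟨p, q, hf, rfl⟩ <;> refine ⟨q, p, ?_, Equiv.swap_comm p q⟩ <;>
    linear_combination -hf

lemma trE_mul_trE (u v : Fin n → ℤ) : trE u * trE v = trE (u + v) := rfl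

lemma trE_pow (v : Fin n → ℤ) (m : ℕ) : trE v ^ m = trE (m • v) := by
  induction m with
  | zero => rw [pow_zero, zero_smul]; rfl
  | succ m ih => rw [pow_succ, ih, trE_mul_trE, succ_nsmul]

lemma trE_injective : Function.Injective (trE : (Fin n → ℤ) → Aff n) :=
  fun _ _ h => congrArg Aff.t h

lemma sref_mul_sref_of_add_eq_cvec (hn : 3 ≤ n) {a a' : Fin n → ℤ} (ha : IsRealRoot a)
    (hc : a + a' = cvec n) : sref a * sref a' = trE (-finPart a) := by
  obtain ⟨p, q, hf, hw⟩ := exists_sref_w_eq_swap (ha.exists_finPart_eq hn)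
  have hf' := finPart_eq_neg_of_add_eq_cvec hc
  have hw' := sref_w_eq_of_finPart_eq_neg hf'
  have hcoeff : coeff0 a + coeff0 a' = 1 := by
    simp only [coeff0, dif_pos (show 0 < n by omega)]
    exact congrFun hc _
  refine Aff.ext ?_ (funext fun i => ?_)
  · show (sref a).w * (sref a').w = 1
    rw [hw', hw, Equiv.swap_mul_self]
  · show coeff0 a * finPart a ((sref a').w i) + coeff0 a' * finPart a' i = -finPart a i
    rw [hw', hw, hf', hf, Pi.single_sub_single_swap_apply]
    simp only [Pi.neg_apply]
    linear_combination (-(Pi.single p 1 - Pi.single q 1 : Fin n → ℤ) i) * hcoeff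

lemma le_cvec_of_add_eq_cvec {a a' : Fin n → ℤ} (ha' : 0 ≤ a') (hc : a + a' = cvec n) :
    a ≤ cvec n :=
  hc ▸ le_add_of_nonneg_right ha'

lemma eq_of_finPart_eq {a b : Fin n → ℤ} (ha₀ : 0 ≤ a) (ha₁ : a ≤ cvec n) (ha : a ≠ 0)
    (hb₀ : 0 ≤ b) (hb₁ : b ≤ cvec n) (hb : b ≠ 0) (h : finPart a = finPart b) :
    a = b := by
  have hconst : ∀ i j, a i - b i = a j - b j := eq_of_forall_fsucc_eq fun i => by
    have := congrFun h i
    simp only [finPart] at this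
    omega
  funext i
  rcases lt_trichotomy (a i) (b i) with hlt | heq | hgt
  · refine absurd (funext fun j => ?_) ha
    have := hconst i j; have := ha₀ j; have := hb₁ j
    simp only [cvec, Pi.zero_apply] at *
    omega
  · exact heq
  · refine absurd (funext fun j => ?_) hb
    have := hconst i j; have := hb₀ j; have := ha₁ j
    simp only [cvec, Pi.zero_apply] at *
    omega

end AffA.Aff

open AffA Aff in
/-- if `α + α' = β + β' = c` and `β ≠ α` then
`(s_β s_{β'})^m ≠ (s_α s_{α'})^m` for every positive integer `m`. -/
theorem pow_ne (n : ℕ) (hn : 3 ≤ n) (β β' α α' : Fin n → ℤ)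
    (hβ : IsPosRoot β) (hβ' : IsPosRoot β') (hα : IsPosRoot α) (hα' : IsPosRoot α')
    (hcβ : β + β' = cvec n) (hcα : α + α' = cvec n) (hne : β ≠ α) :
    ∀ m : ℕ, 1 ≤ m → (sref β * sref β') ^ m ≠ (sref α * sref α') ^ m := by
  intro m hm heq
  rw [sref_mul_sref_of_add_eq_cvec hn hβ.1 hcβ, sref_mul_sref_of_add_eq_cvec hn hα.1 hcα,
    trE_pow, trE_pow] at heq
  have hfin : finPart β = finPart α :=
    neg_injective (smul_right_injective _ (by omega : m ≠ 0) (trE_injective heq))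
  exact hne (eq_of_finPart_eq hβ.2 (le_cvec_of_add_eq_cvec hβ'.2 hcβ) hβ.1.ne_zero
    hα.2 (le_cvec_of_add_eq_cvec hα'.2 hcα) hα.1.ne_zero hfin)
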